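/- Let ρ, ρ₁,…,ρ_M be quantum states on ℂ^d and ε > 0. For each pair (i,j) ∈ {1,…,M}², let O_{i,j} ∈ ℂ^{d×d} be a Hermitian matrix with 0 ⪯ O_{i,j} ⪯ I_d and Tr(O_{i,j}(ρ_i − ρ_j)) = ‖ρ_i − ρ_j‖_Tr, and let E_{i,j} ∈ ℝ satisfy |Tr(O_{i,j}·ρ) − E_{i,j}| ≤ ε/5 for all i,j. Assume there exists k ∈ {1,…,M} with ‖ρ − ρ_k‖_Tr ≤ ε/5. Then any index l ∈ {1,…,M} minimizing l ↦ max_{i∈{1,…,M}} |Tr(O_{i,l}·ρ_l) − E_{i,l}| satisfies ‖ρ_l − ρ‖_Tr ≤ ε. -/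

import Mathlib

open Matrix
open scoped ComplexOrder

noncomputable section

/-- Trace norm of a complex matrix: sum of its singular values. -/
def traceNorm {d : ℕ} (A : Matrix (Fin d) (Fin d) ℂ) : ℝ :=
  ∑ i, Real.sqrt ((Matrix.isHermitian_conjTranspose_mul_self A).eigenvalues i)

/-- Trace distance between quantum states: `‖ρ − σ‖_Tr = (1/2)‖ρ − σ‖₁`. -/
def traceDist {d : ℕ} (ρ σ : Matrix (Fin d) (Fin d) ℂ) : ℝ :=
  traceNorm (ρ - σ) / 2

namespace TournamentAux

variable {d : ℕ}

lemma eig_congr {A B : Matrix (Fin d) (Fin d) ℂ} (h : A = B)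
    (hA : A.IsHermitian) (hB : B.IsHermitian) : hA.eigenvalues = hB.eigenvalues := by
  subst h; rfl

lemma trace_conj_diag (U : Matrix (Fin d) (Fin d) ℂ) (hU : U ∈ Matrix.unitaryGroup (Fin d) ℂ)
    (f : Fin d → ℂ) : (U * Matrix.diagonal f * star U).trace = ∑ i, f i := by
  rw [Matrix.trace_mul_cycle, Matrix.mem_unitaryGroup_iff'.mp hU,
    Matrix.one_mul, Matrix.trace_diagonal]

open scoped MatrixOrder in
lemma traceNorm_eq_sum_abs {A : Matrix (Fin d) (Fin d) ℂ} (hA : A.IsHermitian) :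
    traceNorm A = ∑ i, |hA.eigenvalues i| := by
  set U : Matrix (Fin d) (Fin d) ℂ := (hA.eigenvectorUnitary : Matrix (Fin d) (Fin d) ℂ) with hUdef
  have hUmem : U ∈ Matrix.unitaryGroup (Fin d) ℂ := hA.eigenvectorUnitary.2
  set μ := hA.eigenvalues with hμdef
  have hspec : A = U * Matrix.diagonal (fun i => (μ i : ℂ)) * star U := hA.spectral_theorem
  set S : Matrix (Fin d) (Fin d) ℂ :=
    U * Matrix.diagonal (fun i => ((|μ i| : ℝ) : ℂ)) * star U with hSdef
  have hSpsd : S.PosSemidef := by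
    have hdiag : (Matrix.diagonal (fun i => ((|μ i| : ℝ) : ℂ))).PosSemidef :=
      Matrix.PosSemidef.diagonal fun i => by positivity
    have := hdiag.mul_mul_conjTranspose_same U
    rw [← Matrix.star_eq_conjTranspose] at this
    exact this
  have hB : (Aᴴ * A).PosSemidef := Matrix.posSemidef_conjTranspose_mul_self A
  have hSsq : S ^ 2 = Aᴴ * A := by
    have hUU : star U * U = 1 := Matrix.mem_unitaryGroup_iff'.mp hUmem
    have h1 : S ^ 2 = U * Matrix.diagonal (fun i => (((|μ i| : ℝ) : ℂ) * ((|μ i| : ℝ) : ℂ))) * star U := by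
      rw [pow_two, hSdef]
      rw [show ∀ (X Y Z W V : Matrix (Fin d) (Fin d) ℂ), X * Y * Z * (X * W * V) =
          X * (Y * ((Z * X) * W)) * V from fun _ _ _ _ _ => by noncomm_ring]
      rw [hUU, Matrix.one_mul, Matrix.diagonal_mul_diagonal]
    have h2 : Aᴴ * A = U * Matrix.diagonal (fun i => ((μ i : ℂ) * (μ i : ℂ))) * star U := by
      rw [hA.eq]
      conv_lhs => rw [hspec]
      rw [show ∀ (X Y Z W V : Matrix (Fin d) (Fin d) ℂ), X * Y * Z * (X * W * V) =
          X * (Y * ((Z * X) * W)) * V from fun _ _ _ _ _ => by noncomm_ring]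
      rw [hUU, Matrix.one_mul, Matrix.diagonal_mul_diagonal]
    rw [h1, h2]
    have : (fun i => ((|μ i| : ℝ) : ℂ) * ((|μ i| : ℝ) : ℂ)) = fun i => ((μ i : ℂ) * (μ i : ℂ)) := by
      funext i
      rw [← Complex.ofReal_mul, ← Complex.ofReal_mul, abs_mul_abs_self]
    rw [this]
  have hSeq : S = CFC.sqrt (Aᴴ * A) :=
    ((CFC.sqrt_eq_iff (Aᴴ * A) S hB.nonneg hSpsd.nonneg).mpr (by rw [← pow_two]; exact hSsq)).symm
  have htrS : S.trace = ∑ i, ((|μ i| : ℝ) : ℂ) := trace_conj_diag U hUmem _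
  have htrsqrt : (CFC.sqrt (Aᴴ * A)).trace = ∑ i, ((Real.sqrt (hB.1.eigenvalues i) : ℂ)) := by
    rw [CFC.sqrt_eq_cfc, cfc_nnreal_eq_real _ _ hB.nonneg, hB.1.cfc_eq, IsHermitian.cfc,
      Unitary.conjStarAlgAut_apply, trace_conj_diag _ (hB.1.eigenvectorUnitary.2)]
    refine Finset.sum_congr rfl fun i _ => ?_
    simp [Real.coe_toNNReal', hB.eigenvalues_nonneg i]
  have : (∑ i, ((|μ i| : ℝ) : ℂ)) = ∑ i, ((Real.sqrt (hB.1.eigenvalues i) : ℂ)) := by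
    rw [← htrS, hSeq, htrsqrt]
  have hre : (∑ i, |μ i|) = ∑ i, Real.sqrt (hB.1.eigenvalues i) := by
    exact_mod_cast this
  unfold traceNorm
  rw [← hre]

lemma traceNorm_neg (A : Matrix (Fin d) (Fin d) ℂ) : traceNorm (-A) = traceNorm A := by
  unfold traceNorm
  have h : (-A)ᴴ * (-A) = Aᴴ * A := by simp
  rw [eig_congr h (Matrix.isHermitian_conjTranspose_mul_self (-A)) (Matrix.isHermitian_conjTranspose_mul_self A)]

lemma diag_re_nonneg {B : Matrix (Fin d) (Fin d) ℂ} (hB : B.PosSemidef) (i : Fin d) :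
    0 ≤ (B i i).re := by
  have := hB.re_dotProduct_nonneg (Pi.single i 1)
  simpa [Matrix.mulVec_single, dotProduct, Pi.single_apply, Finset.sum_ite_eq] using this

lemma trace_mul_diag (C : Matrix (Fin d) (Fin d) ℂ) (f : Fin d → ℂ) :
    (C * Matrix.diagonal f).trace = ∑ i, C i i * f i := by
  simp [Matrix.trace, Matrix.diag, Matrix.mul_diagonal]

/-- Key: `Tr(OA).re ≤ ‖A‖₁/2` for traceless Hermitian `A` and `0 ⪯ O ⪯ 1`. -/
lemma key {A O : Matrix (Fin d) (Fin d) ℂ} (hA : A.IsHermitian) (htr : A.trace = 0)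
    (hO : O.PosSemidef) (hO1 : ((1 : Matrix (Fin d) (Fin d) ℂ) - O).PosSemidef) :
    ((O * A).trace).re ≤ traceNorm A / 2 := by
  set U : Matrix (Fin d) (Fin d) ℂ := (hA.eigenvectorUnitary : Matrix (Fin d) (Fin d) ℂ) with hUdef
  have hUmem : U ∈ Matrix.unitaryGroup (Fin d) ℂ := hA.eigenvectorUnitary.2
  have hUU : star U * U = 1 := Matrix.mem_unitaryGroup_iff'.mp hUmem
  have hUU' : U * star U = 1 := Matrix.mem_unitaryGroup_iff.mp hUmem
  set μ := hA.eigenvalues with hμdef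
  have hspec : A = U * Matrix.diagonal (fun i => (μ i : ℂ)) * star U := hA.spectral_theorem
  set C : Matrix (Fin d) (Fin d) ℂ := star U * O * U with hCdef
  have hC : C.PosSemidef := by
    have := hO.conjTranspose_mul_mul_same U
    rw [← Matrix.star_eq_conjTranspose] at this
    exact this
  have hC' : ((1 : Matrix (Fin d) (Fin d) ℂ) - C).PosSemidef := by
    have h : star U * ((1 : Matrix (Fin d) (Fin d) ℂ) - O) * U
        = (1 : Matrix (Fin d) (Fin d) ℂ) - C := by
      rw [Matrix.mul_sub, Matrix.mul_one, Matrix.sub_mul, hUU, hCdef]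
    have := hO1.conjTranspose_mul_mul_same U
    rw [← Matrix.star_eq_conjTranspose, h] at this
    exact this
  have hc0 : ∀ i, 0 ≤ (C i i).re := fun i => diag_re_nonneg hC i
  have hc1 : ∀ i, (C i i).re ≤ 1 := by
    intro i
    have h := diag_re_nonneg hC' i
    have : (((1 : Matrix (Fin d) (Fin d) ℂ) - C) i i).re = 1 - (C i i).re := by
      simp [Matrix.sub_apply, Matrix.one_apply_eq]
    linarith [this ▸ h]
  have hOA : O * A = U * (C * Matrix.diagonal (fun i => (μ i : ℂ))) * star U := by
    rw [hCdef]
    conv_lhs => rw [hspec]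
    rw [show U * (star U * O * U * Matrix.diagonal (fun i => (μ i : ℂ))) * star U
        = (U * star U) * O * (U * Matrix.diagonal (fun i => (μ i : ℂ)) * star U) from by
        noncomm_ring, hUU', Matrix.one_mul]
  have htrace : (O * A).trace = ∑ i, C i i * (μ i : ℂ) := by
    rw [hOA, Matrix.trace_mul_cycle, ← Matrix.mul_assoc, hUU, Matrix.one_mul, trace_mul_diag]
  have hre : ((O * A).trace).re = ∑ i, (C i i).re * μ i := by
    rw [htrace]
    rw [Complex.re_sum]
    exact Finset.sum_congr rfl fun i _ => by simp [Complex.mul_re]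
  have hsumμ : ∑ i, μ i = 0 := by
    have h : A.trace = ∑ i, (μ i : ℂ) := by
      conv_lhs => rw [hspec]
      exact trace_conj_diag U hUmem _
    have : ((∑ i, μ i : ℝ) : ℂ) = 0 := by push_cast; rw [← h, htr]
    exact_mod_cast this
  have hbound : ∑ i, (C i i).re * μ i ≤ ∑ i, max (μ i) 0 := by
    apply Finset.sum_le_sum
    intro i _
    rcases le_or_gt 0 (μ i) with h | h
    · calc (C i i).re * μ i ≤ 1 * μ i := by nlinarith [hc0 i, hc1 i]
        _ = μ i := one_mul _
        _ ≤ max (μ i) 0 := le_max_left _ _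
    · calc (C i i).re * μ i ≤ 0 := by nlinarith [hc0 i, hc1 i]
        _ ≤ max (μ i) 0 := le_max_right _ _
  have hmax : ∑ i, max (μ i) 0 = traceNorm A / 2 := by
    rw [traceNorm_eq_sum_abs hA, ← hμdef]
    have : ∀ i, max (μ i) 0 = (|μ i| + μ i) / 2 := by
      intro i
      rcases le_or_gt 0 (μ i) with h | h
      · rw [max_eq_left h, abs_of_nonneg h]; ring
      · rw [max_eq_right h.le, abs_of_neg h]; ring
    simp_rw [this]
    rw [show (∑ i, (|μ i| + μ i) / 2) = ((∑ i, |μ i|) + ∑ i, μ i) / 2 by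
      rw [← Finset.sum_add_distrib, Finset.sum_div], hsumμ, add_zero]
  rw [hre, ← hmax]
  exact hbound

/-- Achievability of the trace distance by a two-sided-bounded observable. -/
lemma exists_opt {A : Matrix (Fin d) (Fin d) ℂ} (hA : A.IsHermitian) (htr : A.trace = 0) :
    ∃ P : Matrix (Fin d) (Fin d) ℂ, P.PosSemidef ∧
      ((1 : Matrix (Fin d) (Fin d) ℂ) - P).PosSemidef ∧
      ((P * A).trace).re = traceNorm A / 2 := by
  set U : Matrix (Fin d) (Fin d) ℂ := (hA.eigenvectorUnitary : Matrix (Fin d) (Fin d) ℂ) with hUdef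
  have hUmem : U ∈ Matrix.unitaryGroup (Fin d) ℂ := hA.eigenvectorUnitary.2
  have hUU : star U * U = 1 := Matrix.mem_unitaryGroup_iff'.mp hUmem
  have hUU' : U * star U = 1 := Matrix.mem_unitaryGroup_iff.mp hUmem
  set μ := hA.eigenvalues with hμdef
  have hspec : A = U * Matrix.diagonal (fun i => (μ i : ℂ)) * star U := hA.spectral_theorem
  set χ : Fin d → ℂ := fun i => if 0 ≤ μ i then 1 else 0 with hχdef
  refine ⟨U * Matrix.diagonal χ * star U, ?_, ?_, ?_⟩
  · have hdiag : (Matrix.diagonal χ).PosSemidef := by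
      refine Matrix.PosSemidef.diagonal fun i => ?_
      by_cases h : 0 ≤ μ i <;> simp [hχdef, h]
    simpa [Matrix.star_eq_conjTranspose] using hdiag.mul_mul_conjTranspose_same U
  · have h1 : (1 : Matrix (Fin d) (Fin d) ℂ) - U * Matrix.diagonal χ * star U
        = U * Matrix.diagonal (fun i => 1 - χ i) * star U := by
      have : Matrix.diagonal (fun i => (1 : ℂ) - χ i)
          = (1 : Matrix (Fin d) (Fin d) ℂ) - Matrix.diagonal χ := by
        rw [← Matrix.diagonal_one, ← Matrix.diagonal_sub]
      rw [this, Matrix.mul_sub, Matrix.mul_one, Matrix.sub_mul, hUU']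
    rw [h1]
    have hdiag : (Matrix.diagonal (fun i => (1 : ℂ) - χ i)).PosSemidef := by
      refine Matrix.PosSemidef.diagonal fun i => ?_
      by_cases h : 0 ≤ μ i <;> simp [hχdef, h]
    simpa [Matrix.star_eq_conjTranspose] using hdiag.mul_mul_conjTranspose_same U
  · have htrace : ((U * Matrix.diagonal χ * star U) * A).trace = ∑ i, χ i * (μ i : ℂ) := by
      conv_lhs => rw [hspec]
      rw [show (U * Matrix.diagonal χ * star U) * (U * Matrix.diagonal (fun i => (μ i : ℂ)) * star U)
          = U * (Matrix.diagonal χ * ((star U * U) * Matrix.diagonal (fun i => (μ i : ℂ)))) * star U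
          from by noncomm_ring]
      rw [hUU, Matrix.one_mul, Matrix.diagonal_mul_diagonal]
      exact trace_conj_diag U hUmem _
    have hsumμ : ∑ i, μ i = 0 := by
      have h : A.trace = ∑ i, (μ i : ℂ) := by
        conv_lhs => rw [hspec]
        exact trace_conj_diag U hUmem _
      have : ((∑ i, μ i : ℝ) : ℂ) = 0 := by push_cast; rw [← h, htr]
      exact_mod_cast this
    rw [htrace, Complex.re_sum]
    have hterm : ∀ i, (χ i * (μ i : ℂ)).re = max (μ i) 0 := by
      intro i
      by_cases h : 0 ≤ μ i
      · simp [hχdef, h, max_eq_left h]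
      · simp [hχdef, h, max_eq_right (le_of_not_ge h)]
    simp_rw [hterm]
    rw [traceNorm_eq_sum_abs hA, ← hμdef]
    have : ∀ i, max (μ i) 0 = (|μ i| + μ i) / 2 := by
      intro i
      rcases le_or_gt 0 (μ i) with h | h
      · rw [max_eq_left h, abs_of_nonneg h]; ring
      · rw [max_eq_right h.le, abs_of_neg h]; ring
    simp_rw [this]
    rw [show (∑ i, (|μ i| + μ i) / 2) = ((∑ i, |μ i|) + ∑ i, μ i) / 2 by
      rw [← Finset.sum_add_distrib, Finset.sum_div], hsumμ, add_zero]

lemma traceDist_symm (X Y : Matrix (Fin d) (Fin d) ℂ) : traceDist X Y = traceDist Y X := by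
  unfold traceDist
  rw [show Y - X = -(X - Y) from (neg_sub _ _).symm, traceNorm_neg]

lemma obs_diff_le {X Y P : Matrix (Fin d) (Fin d) ℂ} (hX : X.PosSemidef) (hXtr : X.trace = 1)
    (hY : Y.PosSemidef) (hYtr : Y.trace = 1) (hP : P.PosSemidef)
    (hP1 : ((1 : Matrix (Fin d) (Fin d) ℂ) - P).PosSemidef) :
    |((P * X).trace).re - ((P * Y).trace).re| ≤ traceDist X Y := by
  have hherm : (X - Y).IsHermitian := hX.isHermitian.sub hY.isHermitian
  have htr0 : (X - Y).trace = 0 := by rw [Matrix.trace_sub, hXtr, hYtr, sub_self]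
  have hlin : ((P * (X - Y)).trace).re = ((P * X).trace).re - ((P * Y).trace).re := by
    rw [Matrix.mul_sub, Matrix.trace_sub, Complex.sub_re]
  have h1 := key hherm htr0 hP hP1
  have hherm' : (Y - X).IsHermitian := hY.isHermitian.sub hX.isHermitian
  have htr0' : (Y - X).trace = 0 := by rw [Matrix.trace_sub, hXtr, hYtr, sub_self]
  have h2 := key hherm' htr0' hP hP1
  have hlin' : ((P * (Y - X)).trace).re = ((P * Y).trace).re - ((P * X).trace).re := by
    rw [Matrix.mul_sub, Matrix.trace_sub, Complex.sub_re]
  have hn : traceNorm (Y - X) = traceNorm (X - Y) := by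
    rw [show Y - X = -(X - Y) from (neg_sub _ _).symm, traceNorm_neg]
  rw [hlin] at h1
  rw [hlin', hn] at h2
  unfold traceDist
  rw [abs_sub_le_iff]
  exact ⟨h1, h2⟩

lemma dist_triangle {X Y Z : Matrix (Fin d) (Fin d) ℂ}
    (hX : X.PosSemidef) (hXtr : X.trace = 1) (hY : Y.PosSemidef) (hYtr : Y.trace = 1)
    (hZ : Z.PosSemidef) (hZtr : Z.trace = 1) :
    traceDist X Z ≤ traceDist X Y + traceDist Y Z := by
  have hherm : (X - Z).IsHermitian := hX.isHermitian.sub hZ.isHermitian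
  have htr0 : (X - Z).trace = 0 := by rw [Matrix.trace_sub, hXtr, hZtr, sub_self]
  obtain ⟨P, hP, hP1, hPeq⟩ := exists_opt hherm htr0
  have hlin : ((P * (X - Z)).trace).re = ((P * X).trace).re - ((P * Z).trace).re := by
    rw [Matrix.mul_sub, Matrix.trace_sub, Complex.sub_re]
  have h1 := obs_diff_le hX hXtr hY hYtr hP hP1
  have h2 := obs_diff_le hY hYtr hZ hZtr hP hP1
  have : traceDist X Z = ((P * X).trace).re - ((P * Z).trace).re := by
    unfold traceDist
    rw [← hPeq, hlin]
  rw [this]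
  calc ((P * X).trace).re - ((P * Z).trace).re
      = (((P * X).trace).re - ((P * Y).trace).re) + (((P * Y).trace).re - ((P * Z).trace).re) := by
        ring
    _ ≤ |((P * X).trace).re - ((P * Y).trace).re| + |((P * Y).trace).re - ((P * Z).trace).re| := by
        gcongr <;> exact le_abs_self _
    _ ≤ traceDist X Y + traceDist Y Z := add_le_add h1 h2

end TournamentAux

/-- Yatracos-type tournament selection: given candidate states `ρ₁,…,ρ_M`, Holevo–Helstrom
observables `O_{i,j}` (Hermitian, `0 ⪯ O_{i,j} ⪯ I`, `Tr(O_{i,j}(ρ_i − ρ_j)) = ‖ρ_i−ρ_j‖_Tr`)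
and estimates `E_{i,j}` with `|Tr(O_{i,j}ρ) − E_{i,j}| ≤ ε/5`, if some candidate `ρ_k` is
within trace distance `ε/5` of `ρ`, then any minimizer `l` of
`l ↦ max_i |Tr(O_{i,l}ρ_l) − E_{i,l}|` satisfies `‖ρ_l − ρ‖_Tr ≤ ε`. -/
theorem tournament_selection (d M : ℕ) (hd : 0 < d) (hM : 0 < M)
    (ρ : Matrix (Fin d) (Fin d) ℂ) (hρ : ρ.PosSemidef) (hρtr : ρ.trace = 1)
    (ρs : Fin M → Matrix (Fin d) (Fin d) ℂ)
    (hρs : ∀ i, (ρs i).PosSemidef ∧ (ρs i).trace = 1)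
    (O : Fin M → Fin M → Matrix (Fin d) (Fin d) ℂ)
    (hOherm : ∀ i j, (O i j).IsHermitian)
    (hOpsd : ∀ i j, (O i j).PosSemidef)
    (hOle : ∀ i j, ((1 : Matrix (Fin d) (Fin d) ℂ) - O i j).PosSemidef)
    (hHH : ∀ i j, ((O i j) * (ρs i - ρs j)).trace = ((traceDist (ρs i) (ρs j) : ℝ) : ℂ))
    (ε : ℝ) (hε : 0 < ε)
    (E : Fin M → Fin M → ℝ)
    (hE : ∀ i j, |((O i j) * ρ).trace.re - E i j| ≤ ε / 5)
    (k : Fin M) (hk : traceDist ρ (ρs k) ≤ ε / 5)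
    (l : Fin M)
    (hl : ∀ l' : Fin M,
      Finset.univ.sup' (Finset.univ_nonempty_iff.mpr ⟨⟨0, hM⟩⟩)
        (fun i => |((O i l) * (ρs l)).trace.re - E i l|) ≤
      Finset.univ.sup' (Finset.univ_nonempty_iff.mpr ⟨⟨0, hM⟩⟩)
        (fun i => |((O i l') * (ρs l')).trace.re - E i l'|)) :
    traceDist (ρs l) ρ ≤ ε := by
  have hkρ : traceDist (ρs k) ρ ≤ ε / 5 := by
    rw [TournamentAux.traceDist_symm]; exact hk
  -- Step A : the score of candidate k is at most 2ε/5
  have stepA : ∀ i, |((O i k) * (ρs k)).trace.re - E i k| ≤ 2 * (ε / 5) := by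
    intro i
    have t1 : |((O i k * ρs k).trace).re - ((O i k * ρ).trace).re| ≤ traceDist (ρs k) ρ :=
      TournamentAux.obs_diff_le (hρs k).1 (hρs k).2 hρ hρtr (hOpsd i k) (hOle i k)
    calc |((O i k) * (ρs k)).trace.re - E i k|
        ≤ |((O i k * ρs k).trace).re - ((O i k * ρ).trace).re| +
          |((O i k * ρ).trace).re - E i k| := abs_sub_le _ _ _
      _ ≤ ε / 5 + ε / 5 := add_le_add (t1.trans hkρ) (hE i k)
      _ = 2 * (ε / 5) := by ring
  have supk : Finset.univ.sup' (Finset.univ_nonempty_iff.mpr ⟨⟨0, hM⟩⟩)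
      (fun i => |((O i k) * (ρs k)).trace.re - E i k|) ≤ 2 * (ε / 5) :=
    Finset.sup'_le _ _ fun i _ => stepA i
  -- Step B : the score of l is at most 2ε/5, in particular at index k
  have hBl : |((O k l) * (ρs l)).trace.re - E k l| ≤ 2 * (ε / 5) := by
    refine le_trans ?_ ((hl k).trans supk)
    exact Finset.le_sup' (fun i => |((O i l) * (ρs l)).trace.re - E i l|) (Finset.mem_univ k)
  -- Step C : traceDist (ρs k) (ρs l) ≤ 4ε/5
  have hdistkl : traceDist (ρs k) (ρs l) ≤ 4 * (ε / 5) := by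
    have hhh : traceDist (ρs k) (ρs l)
        = ((O k l * ρs k).trace).re - ((O k l * ρs l).trace).re := by
      have := congrArg Complex.re (hHH k l)
      rw [Complex.ofReal_re] at this
      rw [← this, Matrix.mul_sub, Matrix.trace_sub, Complex.sub_re]
    have t1 : |((O k l * ρs k).trace).re - ((O k l * ρ).trace).re| ≤ traceDist (ρs k) ρ :=
      TournamentAux.obs_diff_le (hρs k).1 (hρs k).2 hρ hρtr (hOpsd k l) (hOle k l)
    have t2 := hE k l
    have t3 := hBl
    rw [abs_sub_le_iff] at t1 t2 t3
    rw [hhh]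
    linarith [t1.1, t2.1, t3.2, hkρ, t1.2]
  -- conclude via the triangle inequality
  have htri : traceDist (ρs l) ρ ≤ traceDist (ρs l) (ρs k) + traceDist (ρs k) ρ :=
    TournamentAux.dist_triangle (hρs l).1 (hρs l).2 (hρs k).1 (hρs k).2 hρ hρtr
  have hsym : traceDist (ρs l) (ρs k) = traceDist (ρs k) (ρs l) :=
    TournamentAux.traceDist_symm _ _
  rw [hsym] at htri
  linarith


end
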